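/- arXiv:2211.14473 — 2 statements merged into one kernel-verified Lean document; each statement's English description precedes it below -/
import Mathlib

section
/- Fix reals y > 0, G < 0, G_z, G_zz, G_t. For π, η₁, η₂ ∈ ℝ and φ ∈ L²(ν) define 𝒜(π, η₁, η₂, φ) := y G_t − π ( μ − r + σ η₁ − ∫ γ dν ) + y G ( η₁² + η₂² − ∫ φ dν ) + y G_z ( a + b (ρ_W η₁ + ρ̄_W η₂) ) + (1/2) y G_zz b² + y G_z b (ρ_W η₁ + ρ̄_W η₂) + ∫ ( − π γ(p) + y G φ(p) ) (1 + φ(p)) ν(dp). Then min over π ∈ ℝ of sup over (η₁, η₂) ∈ ℝ² and φ ∈ L²(ν) of 𝒜(π, η₁, η₂, φ) equals y ( G_t + α G_z + (1/2) b² G_zz − β b² G_z²/G + λ G ), where α := a − 2 ρ_W σ b (μ − r)/Σ, β := (ρ̄_W² σ² + m)/Σ, λ := (μ − r)²/Σ; moreover the saddle point is attained at π* = −(2 y G/Σ)( μ − r − σ b ρ_W G_z/G ), η₁* = − σ(μ − r)/Σ − ρ_W b (m/Σ)(G_z/G), η₂* = − G_z b ρ̄_W/G, and φ*(p) = −(γ(p)/Σ)(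 μ − r − σ b ρ_W G_z/G ). -/
open MeasureTheory

/-!
For fixed `π`, the generator splits into a constant plus three independent concave quadratics:
in `η₁`, in `η₂`, and in the value `φ(p)` at every point `p`. Completing the squares gives the
inner supremum `F(π)`, attained at `φ ∝ γ`. `F` is a convex quadratic in `π` with leading
coefficient `-Σ/(4yG) > 0`, minimal at `π*`; and at the inner maximizer for `π*` the
coefficient of `π` in the generator vanishes, which makes `(π*, η₁*, η₂*, φ*)` a saddle point.
-/

theorem mul_sq_add_mul_le_of_neg {c : ℝ} (hc : c < 0) (d x : ℝ) :
    c * x ^ 2 + d * x ≤ -d ^ 2 / (4 * c) := by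
  rw [le_div_iff_of_neg (by linarith)]
  nlinarith [sq_nonneg (2 * c * x + d)]

theorem integral_mul_sq_add_mul_le {Ω : Type*} [MeasurableSpace Ω] {ν : Measure Ω} {c : ℝ}
    (hc : c < 0) {g φ : Ω → ℝ} (hg : MemLp g 2 ν) (hφ : MemLp φ 2 ν) :
    ∫ p, (c * φ p ^ 2 + g p * φ p) ∂ν ≤ -(∫ p, g p ^ 2 ∂ν) / (4 * c) := by
  calc ∫ p, (c * φ p ^ 2 + g p * φ p) ∂ν ≤ ∫ p, -g p ^ 2 / (4 * c) ∂ν :=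
        integral_mono ((hφ.integrable_sq.const_mul c).add (hg.integrable_mul hφ))
          (hg.integrable_sq.neg.div_const _) fun p => mul_sq_add_mul_le_of_neg hc _ _
    _ = -(∫ p, g p ^ 2 ∂ν) / (4 * c) := by rw [integral_div, integral_neg]

section Generator

variable {Ω : Type*} [MeasurableSpace Ω] (ν : Measure Ω) (γ : Ω → ℝ)
  (a b σ μ r ρW ρbW y G Gz Gzz Gt : ℝ)

noncomputable def generator (π η₁ η₂ : ℝ) (φ : Ω → ℝ) : ℝ :=
  y * Gt - π * (μ - r + σ * η₁ - ∫ p, γ p ∂ν)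
    + y * G * (η₁ ^ 2 + η₂ ^ 2 - ∫ p, φ p ∂ν)
    + y * Gz * (a + b * (ρW * η₁ + ρbW * η₂))
    + (1 / 2) * y * Gzz * b ^ 2
    + y * Gz * b * (ρW * η₁ + ρbW * η₂)
    + ∫ p, (-(π * γ p) + y * G * φ p) * (1 + φ p) ∂ν

noncomputable def generatorSup (m π : ℝ) : ℝ :=
  y * Gt + y * Gz * a + (1 / 2) * y * Gzz * b ^ 2 - π * (μ - r)
    - ((2 * y * Gz * b * ρW - π * σ) ^ 2 + (2 * y * Gz * b * ρbW) ^ 2 + π ^ 2 * m) / (4 * (y * G))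

local notation "𝒜" => generator ν γ a b σ μ r ρW ρbW y G Gz Gzz Gt
local notation "𝓕" => generatorSup a b σ μ r ρW ρbW y G Gz Gzz Gt

variable {ν γ a b σ μ r ρW ρbW y G Gz Gzz Gt}

theorem generator_eq_of_memLp [IsFiniteMeasure ν] (hγ : MemLp γ 2 ν) {φ : Ω → ℝ}
    (hφ : MemLp φ 2 ν) (π η₁ η₂ : ℝ) :
    𝒜 π η₁ η₂ φ = y * Gt + y * Gz * a + (1 / 2) * y * Gzz * b ^ 2 - π * (μ - r)
      + (y * G * η₁ ^ 2 + (2 * y * Gz * b * ρW - π * σ) * η₁)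
      + (y * G * η₂ ^ 2 + 2 * y * Gz * b * ρbW * η₂)
      + ∫ p, (y * G * φ p ^ 2 + -π * γ p * φ p) ∂ν := by
  have hγ₁ := hγ.integrable one_le_two
  have hφ₁ := hφ.integrable one_le_two
  have hquad : Integrable (fun p => y * G * φ p ^ 2 + -π * γ p * φ p) ν :=
    (hφ.integrable_sq.const_mul _).add ((hγ.const_mul (-π)).integrable_mul hφ)
  have hsplit : ∫ p, (-(π * γ p) + y * G * φ p) * (1 + φ p) ∂ν
      = ∫ p, (y * G * φ p ^ 2 + -π * γ p * φ p) ∂ν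
        - π * ∫ p, γ p ∂ν + y * G * ∫ p, φ p ∂ν := by
    rw [← integral_const_mul, ← integral_const_mul, ← integral_sub hquad (hγ₁.const_mul π),
      ← integral_add]
    · exact integral_congr_ae (ae_of_all _ fun p => by ring)
    · exact hquad.sub (hγ₁.const_mul π)
    · exact hφ₁.const_mul _
  rw [generator, hsplit]
  ring

theorem generator_const_mul [IsFiniteMeasure ν] (hγ : MemLp γ 2 ν) {m : ℝ}
    (hm : m = ∫ p, γ p ^ 2 ∂ν) (π η₁ η₂ κ : ℝ) :
    𝒜 π η₁ η₂ (fun p => κ * γ p) = y * Gt + y * Gz * a + (1 / 2) * y * Gzz * b ^ 2 - π * (μ - r)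
      + (y * G * η₁ ^ 2 + (2 * y * Gz * b * ρW - π * σ) * η₁)
      + (y * G * η₂ ^ 2 + 2 * y * Gz * b * ρbW * η₂)
      + (y * G * κ ^ 2 - π * κ) * m := by
  rw [generator_eq_of_memLp hγ (hγ.const_mul κ), hm, ← integral_const_mul]
  congr 2
  funext p
  ring

theorem generator_le_generatorSup [IsFiniteMeasure ν] (hyG : y * G < 0) (hγ : MemLp γ 2 ν)
    {m : ℝ} (hm : m = ∫ p, γ p ^ 2 ∂ν) {φ : Ω → ℝ} (hφ : MemLp φ 2 ν) (π η₁ η₂ : ℝ) :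
    𝒜 π η₁ η₂ φ ≤ 𝓕 m π := by
  have hη₁ := mul_sq_add_mul_le_of_neg hyG (2 * y * Gz * b * ρW - π * σ) η₁
  have hη₂ := mul_sq_add_mul_le_of_neg hyG (2 * y * Gz * b * ρbW) η₂
  have hφ' := integral_mul_sq_add_mul_le hyG (hγ.const_mul (-π)) hφ
  have hγπ : ∫ p, (-π * γ p) ^ 2 ∂ν = π ^ 2 * m := by
    simp only [mul_pow, neg_sq, integral_const_mul, hm]
  rw [hγπ] at hφ'
  calc 𝒜 π η₁ η₂ φ ≤ y * Gt + y * Gz * a + (1 / 2) * y * Gzz * b ^ 2 - π * (μ - r)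
        + -(2 * y * Gz * b * ρW - π * σ) ^ 2 / (4 * (y * G))
        + -(2 * y * Gz * b * ρbW) ^ 2 / (4 * (y * G)) + -(π ^ 2 * m) / (4 * (y * G)) := by
        rw [generator_eq_of_memLp hγ hφ]
        gcongr
    _ = 𝓕 m π := by
        rw [generatorSup]
        ring

theorem isGreatest_generator [IsFiniteMeasure ν] (hyG : y * G < 0) (hγ : MemLp γ 2 ν)
    {m : ℝ} (hm : m = ∫ p, γ p ^ 2 ∂ν) (π : ℝ) :
    IsGreatest {v | ∃ (η₁ η₂ : ℝ) (φ : Ω → ℝ), MemLp φ 2 ν ∧ v = 𝒜 π η₁ η₂ φ} (𝓕 m π) := by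
  refine ⟨⟨(π * σ - 2 * y * Gz * b * ρW) / (2 * (y * G)), -(Gz * b * ρbW) / G,
    fun p => π / (2 * (y * G)) * γ p, hγ.const_mul _, ?_⟩, ?_⟩
  · have hy : y ≠ 0 := by rintro rfl; simp at hyG
    have hG : G ≠ 0 := by rintro rfl; simp at hyG
    rw [generator_const_mul hγ hm, generatorSup]
    field_simp
    ring
  · rintro _ ⟨η₁, η₂, φ, hφ, rfl⟩
    exact generator_le_generatorSup hyG hγ hm hφ π η₁ η₂

theorem generator_saddle [IsFiniteMeasure ν] (hG : G ≠ 0) (hγ : MemLp γ 2 ν)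
    {m : ℝ} (hm : m = ∫ p, γ p ^ 2 ∂ν) {Sig : ℝ} (hSig : Sig = σ ^ 2 + m) (hSig0 : Sig ≠ 0)
    {πs η₁s η₂s κs : ℝ} (hπs : πs = -(2 * y * G / Sig) * (μ - r - σ * b * ρW * Gz / G))
    (hη₁s : η₁s = -(σ * (μ - r) / Sig) - ρW * b * (m / Sig) * (Gz / G))
    (hη₂s : η₂s = -(Gz * b * ρbW) / G) (hκs : κs = -(μ - r - σ * b * ρW * Gz / G) / Sig)
    (π : ℝ) :
    𝒜 π η₁s η₂s (fun p => κs * γ p) = 𝓕 m πs := by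
  obtain rfl : m = Sig - σ ^ 2 := by rw [hSig]; ring
  rw [generator_const_mul hγ hm, generatorSup, hπs, hη₁s, hη₂s, hκs]
  field_simp
  ring

theorem generatorSup_saddle_le (hyG : y * G < 0) {m Sig : ℝ} (hSig : Sig = σ ^ 2 + m)
    (hSigpos : 0 < Sig) {πs : ℝ} (hπs : πs = -(2 * y * G / Sig) * (μ - r - σ * b * ρW * Gz / G))
    (π : ℝ) : 𝓕 m πs ≤ 𝓕 m π := by
  have hy : y ≠ 0 := by rintro rfl; simp at hyG
  have hG : G ≠ 0 := by rintro rfl; simp at hyG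
  obtain rfl : m = Sig - σ ^ 2 := by rw [hSig]; ring
  have hsq : 𝓕 (Sig - σ ^ 2) π - 𝓕 (Sig - σ ^ 2) πs = Sig / (-4 * (y * G)) * (π - πs) ^ 2 := by
    rw [generatorSup, generatorSup, hπs]
    field_simp
    ring
  have hcoeff : 0 < Sig / (-4 * (y * G)) := div_pos hSigpos (by linarith)
  nlinarith [mul_nonneg hcoeff.le (sq_nonneg (π - πs))]

theorem generatorSup_saddle_eq (hρ : ρW ^ 2 + ρbW ^ 2 = 1) (hy : y ≠ 0) (hG : G ≠ 0)
    {m Sig : ℝ} (hSig : Sig = σ ^ 2 + m) (hSig0 : Sig ≠ 0) {πs : ℝ}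
    (hπs : πs = -(2 * y * G / Sig) * (μ - r - σ * b * ρW * Gz / G)) :
    𝓕 m πs = y * (Gt + (a - 2 * ρW * σ * b * (μ - r) / Sig) * Gz + (1 / 2) * b ^ 2 * Gzz
      - (ρbW ^ 2 * σ ^ 2 + m) / Sig * b ^ 2 * Gz ^ 2 / G + (μ - r) ^ 2 / Sig * G) := by
  obtain rfl : m = Sig - σ ^ 2 := by rw [hSig]; ring
  have hρb : ρbW ^ 2 = 1 - ρW ^ 2 := by linarith
  rw [generatorSup, hπs, mul_pow _ ρbW, hρb]
  field_simp
  ring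

end Generator

/-- With `y > 0` and `G < 0`, the min–sup of the generator
`𝒜(π,η₁,η₂,φ)` over `π ∈ ℝ` (outer min) and `(η₁,η₂) ∈ ℝ²`, `φ ∈ L²(ν)` (inner sup)
equals `y(G_t + αG_z + (1/2)b²G_zz − βb²G_z²/G + λG)`, and the saddle point is attained at
`π* = −(2yG/Σ)(μ−r−σbρ_WG_z/G)`, `η₁* = −σ(μ−r)/Σ − ρ_Wb(m/Σ)(G_z/G)`,
`η₂* = −G_zbρ̄_W/G`, `φ*(p) = −(γ(p)/Σ)(μ−r−σbρ_WG_z/G)`. -/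
theorem minmax_generator
    (a b σ μ r ρW ρbW : ℝ) (hρ : ρW ^ 2 + ρbW ^ 2 = 1)
    (ν : Measure ℝ) [IsFiniteMeasure ν]
    (γ : ℝ → ℝ) (hγmeas : Measurable γ)
    (hγL2 : Integrable (fun p => (γ p)^2) ν)
    (m : ℝ) (hm : m = ∫ p, (γ p)^2 ∂ν)
    (Sig : ℝ) (hSig : Sig = σ^2 + m) (hSigpos : 0 < Sig)
    (y G Gz Gzz Gt : ℝ) (hy : 0 < y) (hG : G < 0)
    (α β lam : ℝ)
    (hα : α = a - 2 * ρW * σ * b * (μ - r) / Sig)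
    (hβ : β = (ρbW^2 * σ^2 + m) / Sig)
    (hlam : lam = (μ - r)^2 / Sig)
    (A : ℝ → ℝ → ℝ → (ℝ → ℝ) → ℝ)
    (hA : ∀ (π η₁ η₂ : ℝ) (φ : ℝ → ℝ), A π η₁ η₂ φ =
      y * Gt - π * (μ - r + σ * η₁ - ∫ p, γ p ∂ν)
        + y * G * (η₁^2 + η₂^2 - ∫ p, φ p ∂ν)
        + y * Gz * (a + b * (ρW * η₁ + ρbW * η₂))
        + (1/2) * y * Gzz * b^2
        + y * Gz * b * (ρW * η₁ + ρbW * η₂)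
        + ∫ p, (-(π * γ p) + y * G * φ p) * (1 + φ p) ∂ν)
    (πs η₁s η₂s : ℝ) (φs : ℝ → ℝ)
    (hπs : πs = -(2 * y * G / Sig) * (μ - r - σ * b * ρW * Gz / G))
    (hη₁s : η₁s = -(σ * (μ - r) / Sig) - ρW * b * (m / Sig) * (Gz / G))
    (hη₂s : η₂s = -(Gz * b * ρbW) / G)
    (hφs : ∀ p, φs p = -(γ p / Sig) * (μ - r - σ * b * ρW * Gz / G)) :
    MemLp φs 2 ν ∧
    -- saddle point: (η₁*,η₂*,φ*) maximizes the inner problem at π = π* ...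
    (∀ (η₁ η₂ : ℝ) (φ : ℝ → ℝ), MemLp φ 2 ν → A πs η₁ η₂ φ ≤ A πs η₁s η₂s φs) ∧
    -- ... and π* minimizes the outer problem at (η₁*,η₂*,φ*)
    (∀ π : ℝ, A πs η₁s η₂s φs ≤ A π η₁s η₂s φs) ∧
    -- the min–sup value
    sInf {s : ℝ | ∃ π : ℝ,
        s = sSup {v : ℝ | ∃ (η₁ η₂ : ℝ) (φ : ℝ → ℝ), MemLp φ 2 ν ∧ v = A π η₁ η₂ φ}}
      = y * (Gt + α * Gz + (1/2) * b^2 * Gzz - β * b^2 * Gz^2 / G + lam * G) ∧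
    A πs η₁s η₂s φs
      = y * (Gt + α * Gz + (1/2) * b^2 * Gzz - β * b^2 * Gz^2 / G + lam * G) := by
  obtain rfl : A = generator ν γ a b σ μ r ρW ρbW y G Gz Gzz Gt := by
    funext π η₁ η₂ φ
    exact hA π η₁ η₂ φ
  obtain rfl : φs = fun p => -(μ - r - σ * b * ρW * Gz / G) / Sig * γ p := by
    funext p
    rw [hφs]
    ring
  subst hα hβ hlam
  have hyG : y * G < 0 := mul_neg_of_pos_of_neg hy hG
  have hγ : MemLp γ 2 ν := (memLp_two_iff_integrable_sq hγmeas.aestronglyMeasurable).2 hγL2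
  have hsaddle π := generator_saddle (a := a) (Gzz := Gzz) (Gt := Gt) hG.ne hγ hm hSig
    hSigpos.ne' hπs hη₁s hη₂s rfl π
  have hvalue := generatorSup_saddle_eq (a := a) (Gzz := Gzz) (Gt := Gt) hρ hy.ne' hG.ne hSig
    hSigpos.ne' hπs
  have hleast : IsLeast {s | ∃ π, s = generatorSup a b σ μ r ρW ρbW y G Gz Gzz Gt m π}
      (generatorSup a b σ μ r ρW ρbW y G Gz Gzz Gt m πs) :=
    ⟨⟨πs, rfl⟩, by rintro _ ⟨π, rfl⟩; exact generatorSup_saddle_le hyG hSig hSigpos hπs π⟩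
  refine ⟨hγ.const_mul _, fun η₁ η₂ φ hφ => ?_, fun π => by rw [hsaddle, hsaddle], ?_,
    by rw [hsaddle, hvalue]⟩
  · rw [hsaddle]
    exact generator_le_generatorSup hyG hγ hm hφ πs η₁ η₂
  · simp_rw [(isGreatest_generator hyG hγ hm _).csSup_eq]
    rw [hleast.csInf_eq, hvalue]
end

section
/- Fix reals x, D, H > 0, H_z, H_zz, H_t. Then the minimum over π ∈ ℝ of (x − D)² H_t + 2 (x − D) H π ( μ − r − ∫ γ dν ) + (x − D)² H_z a + H π² σ² + (1/2)(x − D)² H_zz b² + 2 (x − D) H_z π σ ρ_W b + H ∫ ( 2 π γ(p)(x − D) + π² γ(p)² ) ν(dp) equals (x − D)² ( H_t + α H_z + (1/2) b² H_zz − (1 − β) b² H_z²/H − λ H ), where α := a − 2 ρ_W σ b (μ − r)/Σ, β := (ρ̄_W² σ² + m)/Σ and λ := (μ − r)²/Σ. -/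
open MeasureTheory Set

/-- With `H > 0`, the minimum over `π ∈ ℝ` of the MV generator expression
equals `(x−D)²(H_t + αH_z + (1/2)b²H_zz − (1−β)b²H_z²/H − λH)`, where
`α = a − 2ρ_Wσb(μ−r)/Σ`, `β = (ρ̄_W²σ² + m)/Σ` and `λ = (μ−r)²/Σ`. -/
theorem mv_generator_min
    (a b σ μ r ρW ρbW : ℝ) (hρ : ρW ^ 2 + ρbW ^ 2 = 1)
    (ν : Measure ℝ) [IsFiniteMeasure ν]
    (γ : ℝ → ℝ) (hγmeas : Measurable γ)
    (hγL2 : Integrable (fun p => (γ p)^2) ν)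
    (m : ℝ) (hm : m = ∫ p, (γ p)^2 ∂ν)
    (Sig : ℝ) (hSig : Sig = σ^2 + m) (hSigpos : 0 < Sig)
    (x D H Hz Hzz Ht : ℝ) (hH : 0 < H)
    (α β lam : ℝ)
    (hα : α = a - 2 * ρW * σ * b * (μ - r) / Sig)
    (hβ : β = (ρbW^2 * σ^2 + m) / Sig)
    (hlam : lam = (μ - r)^2 / Sig) :
    IsLeast
      (Set.range fun π : ℝ =>
        (x - D)^2 * Ht
          + 2 * (x - D) * H * π * (μ - r - ∫ p, γ p ∂ν)
          + (x - D)^2 * Hz * a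
          + H * π^2 * σ^2
          + (1/2) * (x - D)^2 * Hzz * b^2
          + 2 * (x - D) * Hz * π * σ * ρW * b
          + H * ∫ p, (2 * π * γ p * (x - D) + π^2 * (γ p)^2) ∂ν)
      ((x - D)^2 * (Ht + α * Hz + (1/2) * b^2 * Hzz - (1 - β) * b^2 * Hz^2 / H - lam * H)) := by
  have hγint : Integrable γ ν := by
    have h1 : Integrable (fun p => (γ p)^2 + 1) ν := hγL2.add (integrable_const 1)
    refine h1.mono' hγmeas.aestronglyMeasurable (ae_of_all _ fun p => ?_)
    have h2 : |γ p| ≤ (γ p)^2 + 1 := by nlinarith [sq_abs (γ p), sq_nonneg (|γ p| - 1)]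
    simpa [Real.norm_eq_abs] using h2
  set I := ∫ p, γ p ∂ν with hI
  have hint : ∀ π : ℝ, (∫ p, (2 * π * γ p * (x - D) + π^2 * (γ p)^2) ∂ν)
      = 2 * π * (x - D) * I + π^2 * m := by
    intro π
    have h1 : Integrable (fun p => 2 * π * γ p * (x - D)) ν := by
      have := (hγint.const_mul (2 * π)).mul_const (x - D)
      simpa [mul_assoc] using this
    have h2 : Integrable (fun p => π^2 * (γ p)^2) ν := hγL2.const_mul _
    rw [integral_add h1 h2]
    have e1 : (∫ p, 2 * π * γ p * (x - D) ∂ν) = 2 * π * (x - D) * I := by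
      have : (fun p => 2 * π * γ p * (x - D)) = fun p => (2 * π * (x - D)) * γ p := by
        funext p; ring
      rw [this, integral_const_mul]
    have e2 : (∫ p, π^2 * (γ p)^2 ∂ν) = π^2 * m := by
      rw [integral_const_mul, ← hm]
    rw [e1, e2]
  have hHne : H ≠ 0 := ne_of_gt hH
  have hSne : Sig ≠ 0 := ne_of_gt hSigpos
  set K := (x - D) * (H * (μ - r) + Hz * σ * ρW * b) with hK
  set M := (x - D)^2 * (Ht + α * Hz + (1/2) * b^2 * Hzz - (1 - β) * b^2 * Hz^2 / H - lam * H)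
    with hM
  have key : ∀ π : ℝ,
      (x - D)^2 * Ht
        + 2 * (x - D) * H * π * (μ - r - I)
        + (x - D)^2 * Hz * a
        + H * π^2 * σ^2
        + (1/2) * (x - D)^2 * Hzz * b^2
        + 2 * (x - D) * Hz * π * σ * ρW * b
        + H * (2 * π * (x - D) * I + π^2 * m)
      = M + H * Sig * (π + K / (H * Sig))^2 := by
    intro π
    have hρ' : ρbW ^ 2 = 1 - ρW ^ 2 := by linarith
    rw [hM, hK, hα, hβ, hlam, hρ', hSig]
    have hSne' : σ^2 + m ≠ 0 := by rw [← hSig]; exact hSne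
    field_simp
    ring
  constructor
  · refine ⟨-K / (H * Sig), ?_⟩
    simp only [hint]
    rw [key (-K / (H * Sig))]
    have : (-K / (H * Sig) + K / (H * Sig)) = 0 := by ring
    rw [this]
    ring
  · rintro y ⟨π, rfl⟩
    simp only [hint]
    rw [key π]
    nlinarith [sq_nonneg (π + K / (H * Sig)), mul_pos hH hSigpos]
end
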